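/- Let k be an algebraically closed field of characteristic zero and r a positive integer. If ρ and ρ' are two liftings of the same projective representation ρ̄ : SL₂(ℤ) → PGL_r(k), then there exists b ∈ k with b¹² = 1 such that ρ'(𝔰) = b⁻³ ρ(𝔰) and ρ'(𝔱) = b ρ(𝔱). In particular, ρ̄ has at most 12 liftings. -/

import Mathlib

/-!
Two lifts of the same projective representation differ by a homomorphism `χ` from `SL₂(ℤ)` to
the centre of `GL_r(k)`, i.e. to the scalars. The centre is abelian, so the relations `𝔰⁴ = 1` and
`(𝔰𝔱)³ = 𝔰²` force `χ(𝔰) = χ(𝔱)⁻³` and `χ(𝔱)¹² = 1`. Since `𝔰` and `𝔱` generate `SL₂(ℤ)`, a lift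
is determined by the twelfth root of unity `χ(𝔱)`, and there are at most 12 of those.
-/

open Matrix MatrixGroups

namespace ModularGroup

lemma S_pow_four : S ^ 4 = 1 := by
  ext i j
  fin_cases i <;> fin_cases j <;> rfl

lemma S_mul_T_pow_three : (S * T) ^ 3 = S ^ 2 := by
  ext i j
  fin_cases i <;> fin_cases j <;> rfl

lemma hom_ext {M : Type*} [Monoid M] {f g : SL(2, ℤ) →* M} (hS : f S = g S) (hT : f T = g T) :
    f = g :=
  MonoidHom.eq_of_eqOn_dense SpecialLinearGroup.SL2Z_generators (by simp [Set.EqOn, hS, hT])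

section CommGroup

variable {A : Type*} [CommGroup A] (χ : SL(2, ℤ) →* A)

lemma map_S_eq_inv_map_T_pow_three : χ S = (χ T ^ 3)⁻¹ := by
  have h : χ S ^ 3 * χ T ^ 3 = χ S ^ 2 := by
    rw [← mul_pow, ← map_mul, ← map_pow, S_mul_T_pow_three, map_pow]
  refine eq_inv_of_mul_eq_one_left ?_
  calc χ S * χ T ^ 3 = (χ S ^ 2)⁻¹ * (χ S ^ 3 * χ T ^ 3) := by group
    _ = 1 := by rw [h, inv_mul_cancel]

lemma map_T_pow_twelve : χ T ^ 12 = 1 := by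
  calc χ T ^ 12 = ((χ T ^ 3)⁻¹ ^ 4)⁻¹ := by group
    _ = 1 := by rw [← map_S_eq_inv_map_T_pow_three, ← map_pow, S_pow_four, map_one, inv_one]

end CommGroup

end ModularGroup

open Subgroup
open scoped IsMulCommutative

namespace MonoidHom

variable {G H : Type*} [Group G] [Group H] {σ ρ : G →* H}

lemma mul_inv_mem_center_of_mk'_comp_eq
    (h : (QuotientGroup.mk' (center H)).comp σ = (QuotientGroup.mk' (center H)).comp ρ)
    (g : G) : σ g * (ρ g)⁻¹ ∈ center H := by
  simpa [div_eq_mul_inv] using QuotientGroup.eq_iff_div_mem.mp (DFunLike.congr_fun h g)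

def centerDiv (σ ρ : G →* H)
    (h : (QuotientGroup.mk' (center H)).comp σ = (QuotientGroup.mk' (center H)).comp ρ) :
    G →* center H where
  toFun g := ⟨σ g * (ρ g)⁻¹, mul_inv_mem_center_of_mk'_comp_eq h g⟩
  map_one' := by ext; simp
  map_mul' g g' := by
    have hz := mem_center_iff.mp (mul_inv_mem_center_of_mk'_comp_eq h g')
    ext
    calc σ (g * g') * (ρ (g * g'))⁻¹ = σ g * (σ g' * (ρ g')⁻¹) * (ρ g)⁻¹ := by
          simp only [map_mul, _root_.mul_inv_rev, mul_assoc]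
      _ = σ g' * (ρ g')⁻¹ * (σ g * (ρ g)⁻¹) := by rw [hz]; group
      _ = σ g * (ρ g)⁻¹ * (σ g' * (ρ g')⁻¹) := (hz _).symm

@[simp]
lemma coe_centerDiv_apply
    (h : (QuotientGroup.mk' (center H)).comp σ = (QuotientGroup.mk' (center H)).comp ρ)
    (g : G) : (centerDiv σ ρ h g : H) = σ g * (ρ g)⁻¹ :=
  rfl

end MonoidHom

namespace ModularGroup

variable {H : Type*} [Group H] {σ ρ : SL(2, ℤ) →* H}

lemma apply_T_mul_inv_pow_twelve
    (h : (QuotientGroup.mk' (center H)).comp σ = (QuotientGroup.mk' (center H)).comp ρ) :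
    (σ T * (ρ T)⁻¹) ^ 12 = 1 := by
  simpa using congrArg Subtype.val (map_T_pow_twelve (A := center H) (σ.centerDiv ρ h))

lemma apply_S_eq_of_mk'_comp_eq
    (h : (QuotientGroup.mk' (center H)).comp σ = (QuotientGroup.mk' (center H)).comp ρ) :
    σ S = ((σ T * (ρ T)⁻¹) ^ 3)⁻¹ * ρ S := by
  have := congrArg Subtype.val (map_S_eq_inv_map_T_pow_three (A := center H) (σ.centerDiv ρ h))
  simp only [MonoidHom.coe_centerDiv_apply, Subgroup.coe_inv, Subgroup.coe_pow] at this
  rw [← this, inv_mul_cancel_right]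

lemma injOn_apply_T_mul_inv (ρ : SL(2, ℤ) →* H) :
    Set.InjOn (fun σ : SL(2, ℤ) →* H ↦ σ T * (ρ T)⁻¹)
      {σ | (QuotientGroup.mk' (center H)).comp σ = (QuotientGroup.mk' (center H)).comp ρ} := by
  intro σ hσ σ' hσ' hT
  refine hom_ext ?_ (mul_right_cancel hT)
  rw [apply_S_eq_of_mk'_comp_eq hσ, apply_S_eq_of_mk'_comp_eq hσ']
  exact congrArg (fun z ↦ (z ^ 3)⁻¹ * ρ S) hT

end ModularGroup

lemma finite_coe_rootsOfUnity (m : ℕ) [NeZero m] (R : Type*) [CommRing R] [IsDomain R] :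
    (rootsOfUnity m R : Set Rˣ).Finite :=
  Set.finite_coe_iff.mp (inferInstanceAs (Finite (rootsOfUnity m R)))

namespace Matrix.GeneralLinearGroup

variable {n R : Type*} [Fintype n] [DecidableEq n] [CommRing R]

lemma scalar_injective [Nonempty n] : Function.Injective (scalar n : Rˣ →* GL n R) :=
  fun _ _ h ↦ Units.ext (Matrix.scalar_inj.mp (congrArg Units.val h))

lemma val_scalar_mul (u : Rˣ) (A : GL n R) :
    ((scalar n u * A : GL n R) : Matrix n n R) = (u : R) • (A : Matrix n n R) := by
  simp [coe_scalar, smul_eq_diagonal_mul]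

lemma setOf_mem_center_pow_eq_one [Nonempty n] (m : ℕ) :
    {z : GL n R | z ∈ center (GL n R) ∧ z ^ m = 1} = scalar n '' rootsOfUnity m R := by
  ext z
  constructor
  · rintro ⟨hz, hzm⟩
    obtain ⟨c, rfl⟩ : z ∈ (scalar n).range := center_eq_range_scalar (n := n) (R := R) ▸ hz
    refine ⟨c, (mem_rootsOfUnity m c).mpr (scalar_injective (n := n) ?_), rfl⟩
    rw [map_pow, hzm, map_one]
  · rintro ⟨c, hc, rfl⟩
    exact ⟨center_eq_range_scalar (n := n) (R := R) ▸ ⟨c, rfl⟩,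
      by rw [← map_pow, (mem_rootsOfUnity m c).mp hc, map_one]⟩

variable [IsDomain R] [Nonempty n] (m : ℕ) [NeZero m]

lemma finite_setOf_mem_center_pow_eq_one :
    {z : GL n R | z ∈ center (GL n R) ∧ z ^ m = 1}.Finite := by
  rw [setOf_mem_center_pow_eq_one]
  exact (finite_coe_rootsOfUnity m R).image _

lemma ncard_setOf_mem_center_pow_eq_one_le :
    {z : GL n R | z ∈ center (GL n R) ∧ z ^ m = 1}.ncard ≤ m := by
  rw [setOf_mem_center_pow_eq_one]
  exact (Set.ncard_image_le (finite_coe_rootsOfUnity m R)).trans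
    ((Nat.card_coe_set_eq _).symm.trans_le (card_rootsOfUnity (k := m) (R := R)))

end Matrix.GeneralLinearGroup

open ModularGroup

theorem liftings_differ_by_twelfth_root_general (k : Type) [Field k]
    (r : ℕ) (hr : 0 < r)
    (ρbar : SpecialLinearGroup (Fin 2) ℤ →* (GL (Fin r) k ⧸ Subgroup.center (GL (Fin r) k)))
    (ρ ρ' : SpecialLinearGroup (Fin 2) ℤ →* GL (Fin r) k)
    (hρ : (QuotientGroup.mk' (Subgroup.center (GL (Fin r) k))).comp ρ = ρbar)
    (hρ' : (QuotientGroup.mk' (Subgroup.center (GL (Fin r) k))).comp ρ' = ρbar) :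
    (∃ b : k, b ^ 12 = 1 ∧
        ((ρ' ModularGroup.S : Matrix (Fin r) (Fin r) k) = (b ^ 3)⁻¹ • (ρ ModularGroup.S : Matrix (Fin r) (Fin r) k)) ∧
        ((ρ' ModularGroup.T : Matrix (Fin r) (Fin r) k) = b • (ρ ModularGroup.T : Matrix (Fin r) (Fin r) k))) ∧
    ({σ : SpecialLinearGroup (Fin 2) ℤ →* GL (Fin r) k |
        (QuotientGroup.mk' (Subgroup.center (GL (Fin r) k))).comp σ = ρbar}.Finite ∧
      {σ : SpecialLinearGroup (Fin 2) ℤ →* GL (Fin r) k |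
        (QuotientGroup.mk' (Subgroup.center (GL (Fin r) k))).comp σ = ρbar}.ncard ≤ 12) := by
  have : Nonempty (Fin r) := ⟨⟨0, hr⟩⟩
  have hmaps : Set.MapsTo (fun σ ↦ σ T * (ρ T)⁻¹)
      {σ | (QuotientGroup.mk' (Subgroup.center (GL (Fin r) k))).comp σ =
        (QuotientGroup.mk' (Subgroup.center (GL (Fin r) k))).comp ρ}
      {z | z ∈ Subgroup.center (GL (Fin r) k) ∧ z ^ 12 = 1} :=
    fun _ hσ ↦ ⟨MonoidHom.mul_inv_mem_center_of_mk'_comp_eq hσ T, apply_T_mul_inv_pow_twelve hσ⟩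
  have hρ'ρ := hρ'.trans hρ.symm
  obtain ⟨c, hc, hcT⟩ :
      ρ' T * (ρ T)⁻¹ ∈ GeneralLinearGroup.scalar (Fin r) '' rootsOfUnity 12 k :=
    GeneralLinearGroup.setOf_mem_center_pow_eq_one (n := Fin r) (R := k) 12 ▸ hmaps hρ'ρ
  subst hρ
  refine ⟨⟨c, ?_, ?_, ?_⟩, ?_, ?_⟩
  · rw [← Units.val_pow_eq_pow_val, (mem_rootsOfUnity 12 c).mp hc, Units.val_one]
  · rw [apply_S_eq_of_mk'_comp_eq hρ'ρ, ← hcT, ← map_pow, ← map_inv,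
      GeneralLinearGroup.val_scalar_mul, Units.val_inv_eq_inv_val, Units.val_pow_eq_pow_val]
  · rw [← GeneralLinearGroup.val_scalar_mul, hcT, inv_mul_cancel_right]
  · exact Set.Finite.of_injOn hmaps (injOn_apply_T_mul_inv ρ)
      (GeneralLinearGroup.finite_setOf_mem_center_pow_eq_one 12)
  · exact (Set.ncard_le_ncard_of_injOn _ hmaps (injOn_apply_T_mul_inv ρ)
      (GeneralLinearGroup.finite_setOf_mem_center_pow_eq_one 12)).trans
      (GeneralLinearGroup.ncard_setOf_mem_center_pow_eq_one_le 12)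

/-- If `ρ` and `ρ'` are two liftings of the same projective representation
`ρ̄ : SL₂(ℤ) → PGL_r(k)`, then there is `b ∈ k` with `b¹² = 1`, `ρ'(𝔰) = b⁻³ ρ(𝔰)` and
`ρ'(𝔱) = b ρ(𝔱)`.  In particular `ρ̄` has at most 12 liftings. -/
theorem liftings_differ_by_twelfth_root (k : Type) [Field k] [IsAlgClosed k] [CharZero k]
    (r : ℕ) (hr : 0 < r)
    (ρbar : SpecialLinearGroup (Fin 2) ℤ →* (GL (Fin r) k ⧸ Subgroup.center (GL (Fin r) k)))
    (ρ ρ' : SpecialLinearGroup (Fin 2) ℤ →* GL (Fin r) k)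
    (hρ : (QuotientGroup.mk' (Subgroup.center (GL (Fin r) k))).comp ρ = ρbar)
    (hρ' : (QuotientGroup.mk' (Subgroup.center (GL (Fin r) k))).comp ρ' = ρbar) :
    (∃ b : k, b ^ 12 = 1 ∧
        ((ρ' ModularGroup.S : Matrix (Fin r) (Fin r) k) = (b ^ 3)⁻¹ • (ρ ModularGroup.S : Matrix (Fin r) (Fin r) k)) ∧
        ((ρ' ModularGroup.T : Matrix (Fin r) (Fin r) k) = b • (ρ ModularGroup.T : Matrix (Fin r) (Fin r) k))) ∧
    ({σ : SpecialLinearGroup (Fin 2) ℤ →* GL (Fin r) k |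
        (QuotientGroup.mk' (Subgroup.center (GL (Fin r) k))).comp σ = ρbar}.Finite ∧
      {σ : SpecialLinearGroup (Fin 2) ℤ →* GL (Fin r) k |
        (QuotientGroup.mk' (Subgroup.center (GL (Fin r) k))).comp σ = ρbar}.ncard ≤ 12) :=
  liftings_differ_by_twelfth_root_general k r hr ρbar ρ ρ' hρ hρ'
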